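/- arXiv:hep-th/0206125 — 2 statements merged into one kernel-verified Lean document; each statement's English description precedes it below -/
import Mathlib

section
/- In ℝ⁶ (d = 6, no dilatons) consider the magnetic wall form w_M = e₁ + e₂ of a 3-form and the symmetry wall form w_S = e₃ − e₂. Then (w_M|w_M) = 6/5, (w_S|w_S) = 2, (w_M|w_S) = −1, so (w_M|w_S)²/((w_M|w_M)(w_S|w_S)) = 5/12; and for every integer k ≥ 2 one has cos²(π/k) ≠ 5/12. (Hence the dihedral angle between these two walls is not an integer submultiple of π, and the Einstein–3-form billiard in spacetime dimension D = 7 is not a Coxeter polyhedron.) -/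
/-- The wall scalar product on `ℝ^d` (no dilatons):
`(w|w') = Σᵢ wᵢw'ᵢ − (1/(d−1)) (Σᵢ wᵢ)(Σᵢ w'ᵢ)`. -/
noncomputable def wallIP (d : ℕ) (w w' : Fin d → ℝ) : ℝ :=
  (∑ i, w i * w' i) - (1 / ((d : ℝ) - 1)) * (∑ i, w i) * (∑ i, w' i)

lemma cos_sq_ne (k : ℕ) (hk : 2 ≤ k) : Real.cos (Real.pi / k) ^ 2 ≠ 5 / 12 := by
  rcases eq_or_lt_of_le hk with h2 | h2
  · rw [← h2]; norm_num [Real.cos_pi_div_two]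
  rcases eq_or_lt_of_le (Nat.succ_le_of_lt h2) with h3 | h3
  · rw [← h3]; rw [show ((3:ℕ):ℝ) = 3 by norm_num, Real.cos_pi_div_three]; norm_num
  -- now 4 ≤ k : cos(π/k) ≥ cos(π/4) = √2/2 so square ≥ 1/2 > 5/12
  have hk4 : (4:ℝ) ≤ k := by exact_mod_cast Nat.succ_le_of_lt h3
  have hle : Real.pi / k ≤ Real.pi / 4 :=
    div_le_div_of_nonneg_left Real.pi_pos.le (by norm_num) hk4
  have hcos : Real.cos (Real.pi / 4) ≤ Real.cos (Real.pi / k) := by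
    apply Real.cos_le_cos_of_nonneg_of_le_pi
    · positivity
    · linarith [Real.pi_pos, div_le_self Real.pi_pos.le (by norm_num : (1:ℝ) ≤ 4)]
    · exact hle
  rw [Real.cos_pi_div_four] at hcos
  have h0 : (0:ℝ) ≤ Real.sqrt 2 / 2 := by positivity
  have hsq : (Real.sqrt 2 / 2) ^ 2 ≤ Real.cos (Real.pi / k) ^ 2 :=
    pow_le_pow_left₀ h0 hcos 2
  have : (Real.sqrt 2 / 2) ^ 2 = 1 / 2 := by
    rw [div_pow, Real.sq_sqrt (by norm_num : (0:ℝ) ≤ 2)]; norm_num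
  rw [this] at hsq
  intro h; rw [h] at hsq; norm_num at hsq

/-- In `ℝ⁶` (d = 6), the magnetic wall form `w_M = e₁ + e₂` of a 3-form and the
symmetry wall form `w_S = e₃ − e₂` satisfy `(w_M|w_M) = 6/5`, `(w_S|w_S) = 2`,
`(w_M|w_S) = −1`, so the squared cosine of their dihedral angle is `5/12`; and
`cos²(π/k) ≠ 5/12` for every integer `k ≥ 2`. Hence the Einstein–3-form billiard
in `D = 7` is not Coxeter. -/
theorem magnetic_wall_D7_not_coxeter (wM wS : Fin 6 → ℝ)
    (hM : ∀ i, wM i = if i.val < 2 then 1 else 0)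
    (hS : ∀ i, wS i = (if i.val = 2 then 1 else 0) - (if i.val = 1 then 1 else 0)) :
    wallIP 6 wM wM = 6 / 5 ∧
    wallIP 6 wS wS = 2 ∧
    wallIP 6 wM wS = -1 ∧
    (wallIP 6 wM wS) ^ 2 / (wallIP 6 wM wM * wallIP 6 wS wS) = 5 / 12 ∧
    (∀ k : ℕ, 2 ≤ k → Real.cos (Real.pi / k) ^ 2 ≠ 5 / 12) := by
  have h1 : wallIP 6 wM wM = 6 / 5 := by
    simp only [wallIP, Fin.sum_univ_six, hM]; norm_num [show ((3:Fin 6):ℕ)=3 from rfl, show ((4:Fin 6):ℕ)=4 from rfl, show ((5:Fin 6):ℕ)=5 from rfl]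
  have h2 : wallIP 6 wS wS = 2 := by
    simp only [wallIP, Fin.sum_univ_six, hS]; norm_num [show ((3:Fin 6):ℕ)=3 from rfl, show ((4:Fin 6):ℕ)=4 from rfl, show ((5:Fin 6):ℕ)=5 from rfl]
  have h3 : wallIP 6 wM wS = -1 := by
    simp only [wallIP, Fin.sum_univ_six, hM, hS]; norm_num [show ((3:Fin 6):ℕ)=3 from rfl, show ((4:Fin 6):ℕ)=4 from rfl, show ((5:Fin 6):ℕ)=5 from rfl]
  refine ⟨h1, h2, h3, by rw [h1, h2, h3]; norm_num, cos_sq_ne⟩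
end

section
/- (E₈ sequence / eleven-dimensional supergravity, E₁₀.) On ℝ^{10} (d = 10, no dilatons) consider the ten wall forms w_i = e_{i+1} − e_i for 1 ≤ i ≤ 9 (symmetry walls) and w_{10} = e₁ + e₂ + e₃ (electric wall of the 3-form). Then (w_i|w_i) = 2 for every i, and the Cartan matrix A_{ij} = 2(w_i|w_j)/(w_i|w_i) is the symmetric matrix with A_{ii} = 2, A_{i,i+1} = A_{i+1,i} = −1 for 1 ≤ i ≤ 8, A_{3,10} = A_{10,3} = −1, and all other entries 0. This is the generalized Cartan matrix of the hyperbolic Kac–Moody algebra E₁₀ = E₈^∧∧ (an A₉ chain with one extra node attached to its third node). -/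
open Finset

section WallProduct

variable {d : ℕ}

theorem wallIP_comm (w w' : Fin d → ℝ) : wallIP d w w' = wallIP d w' w := by
  simp only [wallIP, mul_comm (w _), mul_right_comm _ (∑ i, w i)]

theorem wallIP_of_sum_eq_zero {w : Fin d → ℝ} (hw : ∑ i, w i = 0) (w' : Fin d → ℝ) :
    wallIP d w w' = ∑ i, w i * w' i := by
  simp [wallIP, hw]

theorem wallIP_single_sub_single (a b : Fin d) (w' : Fin d → ℝ) :
    wallIP d (Pi.single b 1 - Pi.single a 1) w' = w' b - w' a := by
  rw [wallIP_of_sum_eq_zero (by simp [sum_sub_distrib])]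
  simp [sub_mul, sum_sub_distrib, Pi.single_apply]

theorem wallIP_boole_self (p : Fin d → Prop) [DecidablePred p] :
    wallIP d (fun l => if p l then 1 else 0) (fun l => if p l then 1 else 0) =
      #{l | p l} - #{l | p l} ^ 2 / ((d : ℝ) - 1) := by
  simp +contextual [wallIP, sum_boole]
  ring

end WallProduct

def e10Wall (m : Fin 10) : Fin 10 → ℝ :=
  if m.val < 9 then
    fun l => (if l.val = m.val + 1 then (1 : ℝ) else 0) - (if l.val = m.val then 1 else 0)
  else
    fun l => if l.val < 3 then 1 else 0

def e10Cartan (i j : Fin 10) : ℝ :=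
  if i = j then 2
  else if (i.val + 1 = j.val ∨ j.val + 1 = i.val) ∧ i.val ≤ 8 ∧ j.val ≤ 8 then -1
  else if (i.val = 2 ∧ j.val = 9) ∨ (j.val = 2 ∧ i.val = 9) then -1
  else 0

theorem e10Cartan_comm (i j : Fin 10) : e10Cartan i j = e10Cartan j i := by
  unfold e10Cartan
  simp only [eq_comm (a := i), or_comm (a := i.val + 1 = j.val), and_comm (a := i.val ≤ 8),
    or_comm (a := i.val = 2 ∧ j.val = 9)]

theorem e10Wall_of_lt {m : Fin 10} (hm : m.val < 9) :
    e10Wall m = Pi.single ⟨m.val + 1, by omega⟩ 1 - Pi.single m 1 := by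
  ext l
  simp [e10Wall, hm, Pi.single_apply, Fin.ext_iff]

theorem wallIP_e10Wall_of_lt {i : Fin 10} (hi : i.val < 9) (j : Fin 10) :
    wallIP 10 (e10Wall i) (e10Wall j) = e10Cartan i j := by
  rw [e10Wall_of_lt hi, wallIP_single_sub_single]
  by_cases hj : j.val < 9 <;>
    simp only [e10Wall, e10Cartan, Fin.ext_iff, hj, if_true, if_false] <;>
    split_ifs <;> norm_num <;> omega

theorem wallIP_e10Wall (i j : Fin 10) :
    wallIP 10 (e10Wall i) (e10Wall j) = e10Cartan i j := by
  by_cases hi : i.val < 9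
  · exact wallIP_e10Wall_of_lt hi j
  by_cases hj : j.val < 9
  · rw [wallIP_comm, e10Cartan_comm, wallIP_e10Wall_of_lt hj]
  obtain rfl : i = 9 := by omega
  obtain rfl : j = 9 := by omega
  have : #{l : Fin 10 | l.val < 3} = 3 := by decide
  simp only [e10Wall, e10Cartan, if_neg hi, wallIP_boole_self, this]
  norm_num

/-- (E₈ sequence / eleven-dimensional supergravity, E₁₀.) On `ℝ^{10}` (d = 10, no
dilatons), the ten dominant wall forms (0-based index `m`): symmetry walls
`w_m = e_{m+2} − e_{m+1}` for `m ≤ 8` and the electric wall `w₉ = e₁ + e₂ + e₃` of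
the 3-form, all have squared norm `2`, and their Cartan matrix
`A_{ij} = 2(w_i|w_j)/(w_i|w_i)` is the symmetric generalized Cartan matrix of the
hyperbolic Kac–Moody algebra `E₁₀ = E₈^∧∧`: `A_{ii} = 2`, `A = −1` between consecutive
symmetry walls, `A = −1` between the electric wall and the third symmetry wall
(0-based index `2`), and `0` elsewhere. -/
theorem E10_billiard (w : Fin 10 → Fin 10 → ℝ)
    (hw : ∀ m : Fin 10, w m =
      if m.val < 9 then
        fun l => (if l.val = m.val + 1 then (1 : ℝ) else 0)
          - (if l.val = m.val then 1 else 0)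
      else
        fun l => if l.val < 3 then 1 else 0)
    (A : Fin 10 → Fin 10 → ℝ)
    (hA : ∀ i j, A i j = 2 * wallIP 10 (w i) (w j) / wallIP 10 (w i) (w i)) :
    (∀ m, wallIP 10 (w m) (w m) = 2) ∧
    (∀ i j : Fin 10, A i j =
      if i = j then 2
      else if (i.val + 1 = j.val ∨ j.val + 1 = i.val) ∧ i.val ≤ 8 ∧ j.val ≤ 8 then -1
      else if (i.val = 2 ∧ j.val = 9) ∨ (j.val = 2 ∧ i.val = 9) then -1
      else 0) := by
  obtain rfl : w = e10Wall := funext hw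
  have hnorm : ∀ m, wallIP 10 (e10Wall m) (e10Wall m) = 2 := fun m => by
    simp [wallIP_e10Wall, e10Cartan]
  refine ⟨hnorm, fun i j => ?_⟩
  rw [hA, hnorm, wallIP_e10Wall, mul_div_cancel_left₀ _ two_ne_zero, e10Cartan]
end
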